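/- Let K : ℝ → (ℤ → ℝ) be the kernel K(x)_n = 2^{-n} χ_{(-2^n,0)}(x) − 2^{-(n-1)} χ_{(-2^{n-1},0)}(x), and fix 2 ≤ s < ∞. Then K satisfies the Hörmander condition: there is a constant C > 0 such that for all x > 0, ∫_{{y : y > 4x}} ‖K(x−y) − K(−y)‖_{ℓ^s} dy ≤ C. -/

import Mathlib

/-!
For `v > 0`, `K_n(-v)` is `-2^{-n}` on `(0, 2^{n-1})`, `2^{-n}` on `[2^{n-1}, 2^n)` and `0` from
`2^n` on, so it only depends on which dyadic interval contains `v`. Hence `K(x - y) - K(-y)`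
vanishes unless some `2^k` lies in `(y - x, y]`; otherwise its entries vanish for `2^n ≤ y - x`
and are `O(2^{-n})` above, so its `ℓ^s` norm is `O(1/(y - x))`. For `y > 4x` the exceptional `y`
lie in the intervals `[2^k, 2^k + x)` with `2^k > 3x`, where `1/(y - x) = O(2^{-k})`; these
contribute a geometric series of total size `O(1)`.
-/

open MeasureTheory Set Real

/-- Indicator function of the open interval (a, b). -/
noncomputable def chi (a b : ℝ) : ℝ → ℝ := Set.indicator (Set.Ioo a b) (fun _ => 1)

/-- The sequence-valued kernel. -/
noncomputable def Kker (n : ℤ) (x : ℝ) : ℝ :=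
  (2:ℝ)^(-n) * chi (-(2:ℝ)^n) 0 x - (2:ℝ)^(-(n-1)) * chi (-(2:ℝ)^(n-1)) 0 x

/-- The `ℓ^s` norm of a sequence indexed by `ℤ`. -/
noncomputable def lnorms (s : ℝ) (a : ℤ → ℝ) : ℝ := (∑' n : ℤ, |a n| ^ s) ^ (1/s)

theorem tsum_int_eq_tsum_nat_add {M : Type*} [AddCommMonoid M] [TopologicalSpace M]
    {f : ℤ → M} {n₀ : ℤ} (hf : ∀ n < n₀, f n = 0) :
    ∑' n, f n = ∑' m : ℕ, f (n₀ + m) := by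
  refine ((add_right_injective n₀).comp Nat.cast_injective |>.tsum_eq fun n hn => ?_).symm
  by_contra h
  exact hn (hf n (not_le.1 fun hle => h ⟨(n - n₀).toNat, by simp; omega⟩))

theorem lnorms_le_of_abs_le {s c : ℝ} (hs : 1 ≤ s) (hc : 0 ≤ c) {a : ℤ → ℝ} {n₀ : ℤ}
    (ha : ∀ n, |a n| ≤ c / 2 ^ n) (ha₀ : ∀ n < n₀, a n = 0) :
    lnorms s a ≤ 2 * c / 2 ^ n₀ := by
  have hs₀ : 0 < s := by linarith
  set B : ℝ := c / 2 ^ n₀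
  have hB : 0 ≤ B := by positivity
  set r : ℝ := (1 / 2) ^ s
  have hr₀ : 0 ≤ r := by positivity
  have hr : r ≤ 1 / 2 := by
    calc r ≤ (1 / 2) ^ (1 : ℝ) :=
          Real.rpow_le_rpow_of_exponent_ge (by norm_num) (by norm_num) hs
      _ = 1 / 2 := Real.rpow_one _
  have hterm : ∀ m : ℕ, |a (n₀ + m)| ^ s ≤ B ^ s * r ^ m := by
    intro m
    have h : |a (n₀ + m)| ≤ B * (1 / 2) ^ m := by
      calc |a (n₀ + m)| ≤ c / 2 ^ (n₀ + m) := ha _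
        _ = B * (1 / 2) ^ m := by
          rw [zpow_add₀ two_ne_zero, zpow_natCast]
          simp only [B, one_div_pow]
          field_simp
    calc |a (n₀ + m)| ^ s ≤ (B * (1 / 2) ^ m) ^ s := by gcongr
      _ = B ^ s * r ^ m := by
        rw [Real.mul_rpow hB (by positivity), Real.rpow_pow_comm (by norm_num)]
  have hgeom : Summable fun m : ℕ => B ^ s * r ^ m :=
    (summable_geometric_of_lt_one hr₀ (by linarith)).mul_left _
  have hsum : ∑' n, |a n| ^ s ≤ 2 * B ^ s := by
    rw [tsum_int_eq_tsum_nat_add (fun n hn => by simp [ha₀ n hn, Real.zero_rpow hs₀.ne'])]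
    calc ∑' m : ℕ, |a (n₀ + m)| ^ s ≤ ∑' m : ℕ, B ^ s * r ^ m :=
          (hgeom.of_nonneg_of_le (fun _ => by positivity) hterm).tsum_le_tsum hterm hgeom
      _ = B ^ s * (1 - r)⁻¹ := by
          rw [tsum_mul_left, tsum_geometric_of_lt_one hr₀ (by linarith)]
      _ ≤ 2 * B ^ s := by
        rw [mul_comm 2]
        gcongr
        rw [inv_le_comm₀ (by linarith) two_pos]
        linarith
  calc lnorms s a ≤ (2 * B ^ s) ^ (1 / s) := by
        unfold lnorms
        gcongr
    _ = 2 ^ (1 / s) * B := by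
        rw [Real.mul_rpow two_pos.le (by positivity), ← Real.rpow_mul hB,
          mul_one_div_cancel hs₀.ne', Real.rpow_one]
    _ ≤ 2 ^ (1 : ℝ) * B := by
        gcongr
        · norm_num
        exact (div_le_one hs₀).2 hs
    _ = 2 * c / 2 ^ n₀ := by rw [Real.rpow_one]; ring

theorem chi_neg_zero_neg {a v : ℝ} (hv : 0 < v) : chi (-a) 0 (-v) = if v < a then 1 else 0 := by
  simp [chi, Set.indicator_apply, hv]

theorem Kker_neg {v : ℝ} (hv : 0 < v) (n : ℤ) :
    Kker n (-v) =
      (if v < 2 ^ n then 1 / 2 ^ n else 0) - (if v < 2 ^ (n - 1) then 2 / 2 ^ n else 0) := by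
  have h : (2 : ℝ) ^ (-(n - 1)) = 2 / 2 ^ n := by
    rw [neg_sub, zpow_sub₀ two_ne_zero, zpow_one]
  simp only [Kker, chi_neg_zero_neg hv, h, zpow_neg]
  split_ifs <;> ring

theorem abs_Kker_neg_le {v : ℝ} (hv : 0 < v) (n : ℤ) : |Kker n (-v)| ≤ 1 / 2 ^ n := by
  have hpow : (2 : ℝ) ^ (n - 1) ≤ 2 ^ n := zpow_le_zpow_right₀ one_le_two (by omega)
  have hpos : (0 : ℝ) < 1 / 2 ^ n := by positivity
  rw [Kker_neg hv]
  split_ifs with h₁ h₂ h₂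
  · rw [abs_le]; constructor <;> linarith [show 2 / (2 : ℝ) ^ n = 2 * (1 / 2 ^ n) by ring]
  · simp
  · linarith
  · simpa using hpos.le

theorem Kker_neg_eq_zero {v : ℝ} {n : ℤ} (hn : 2 ^ n ≤ v) : Kker n (-v) = 0 := by
  have hpow : (2 : ℝ) ^ (n - 1) ≤ 2 ^ n := zpow_le_zpow_right₀ one_le_two (by omega)
  rw [Kker_neg (lt_of_lt_of_le (by positivity) hn), if_neg (by linarith), if_neg (by linarith),
    sub_zero]

theorem Kker_neg_eq_of_forall_lt_iff {u v : ℝ} (hu : 0 < u) (hv : 0 < v)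
    (h : ∀ k : ℤ, u < 2 ^ k ↔ v < 2 ^ k) (n : ℤ) : Kker n (-u) = Kker n (-v) := by
  simp only [Kker_neg hu, Kker_neg hv, h]

theorem lnorms_Kker_sub_le {s x y : ℝ} (hs : 1 ≤ s) (hx : 0 < x) (hxy : x < y) :
    lnorms s (fun n => Kker n (x - y) - Kker n (-y)) ≤ 4 * (y - x)⁻¹ := by
  have hu : 0 < y - x := by linarith
  set n₀ := Int.log 2 (y - x) + 1
  have hlt : y - x < 2 ^ n₀ := by exact_mod_cast Int.lt_zpow_succ_log_self one_lt_two (y - x)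
  have hvanish : ∀ n < n₀, Kker n (x - y) - Kker n (-y) = 0 := fun n hn => by
    have hle : (2 : ℝ) ^ n ≤ y - x :=
      (zpow_le_zpow_right₀ one_le_two (Int.le_of_lt_add_one hn)).trans
        (by exact_mod_cast Int.zpow_log_le_self one_lt_two hu)
    rw [← neg_sub y x, Kker_neg_eq_zero hle, Kker_neg_eq_zero (by linarith), sub_zero]
  have habs : ∀ n, |Kker n (x - y) - Kker n (-y)| ≤ 2 / 2 ^ n := fun n => by
    rw [← neg_sub y x]
    calc _ ≤ |Kker n (-(y - x))| + |Kker n (-y)| := abs_sub _ _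
      _ ≤ 1 / 2 ^ n + 1 / 2 ^ n :=
          add_le_add (abs_Kker_neg_le hu n) (abs_Kker_neg_le (by linarith) n)
      _ = 2 / 2 ^ n := by ring
  calc _ ≤ 2 * 2 / 2 ^ n₀ := lnorms_le_of_abs_le hs zero_le_two habs hvanish
    _ ≤ 4 * (y - x)⁻¹ := by
      rw [div_eq_mul_inv]
      gcongr
      norm_num

/-- `y ∈ dyadicRightNbhd x` iff `(y - x, y]` contains a power of `2`. -/
def dyadicRightNbhd (x : ℝ) : Set ℝ := ⋃ k : ℤ, Ico (2 ^ k) (2 ^ k + x)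

theorem lnorms_Kker_sub_eq_zero {s x y : ℝ} (hs : s ≠ 0) (hx : 0 < x) (hxy : x < y)
    (hy : y ∉ dyadicRightNbhd x) : lnorms s (fun n => Kker n (x - y) - Kker n (-y)) = 0 := by
  have hiff : ∀ k : ℤ, y - x < 2 ^ k ↔ y < 2 ^ k := fun k => by
    refine ⟨fun hk => not_le.1 fun hle => hy (mem_iUnion.2 ⟨k, hle, by linarith⟩),
      fun hk => by linarith⟩
  have hD : ∀ n, Kker n (x - y) - Kker n (-y) = 0 := fun n => by
    rw [← neg_sub y x, Kker_neg_eq_of_forall_lt_iff (by linarith) (by linarith) hiff, sub_self]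
  simp [lnorms, hD, Real.zero_rpow hs, Real.zero_rpow (inv_ne_zero hs)]

theorem measurableSet_dyadicRightNbhd (x : ℝ) : MeasurableSet (dyadicRightNbhd x) :=
  MeasurableSet.iUnion fun _ => measurableSet_Ico

theorem setLIntegral_Ico_inter_Ioi_inv_sub_le (x : ℝ) (k : ℤ) :
    ∫⁻ y in Ico (2 ^ k) (2 ^ k + x) ∩ Ioi (4 * x), ENNReal.ofReal (y - x)⁻¹ ≤
      ENNReal.ofReal (4 / 3 * x / 2 ^ k) := by
  have hpt : ∀ y ∈ Ico ((2 : ℝ) ^ k) (2 ^ k + x) ∩ Ioi (4 * x),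
      ENNReal.ofReal (y - x)⁻¹ ≤ ENNReal.ofReal (4 / 3 / 2 ^ k) := by
    rintro y ⟨⟨hky, -⟩, hxy : 4 * x < y⟩
    have hk : (0 : ℝ) < 2 ^ k := by positivity
    apply ENNReal.ofReal_le_ofReal
    -- `4x < y` gives `y - x > 3y/4 ≥ 3 * 2^k / 4`
    calc (y - x)⁻¹ ≤ (3 / 4 * 2 ^ k)⁻¹ := inv_anti₀ (by positivity) (by linarith)
      _ = 4 / 3 / 2 ^ k := by ring
  calc _ ≤ ∫⁻ _ in Ico ((2 : ℝ) ^ k) (2 ^ k + x) ∩ Ioi (4 * x),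
          ENNReal.ofReal (4 / 3 / 2 ^ k) :=
        setLIntegral_mono' (measurableSet_Ico.inter measurableSet_Ioi) hpt
    _ = ENNReal.ofReal (4 / 3 / 2 ^ k) *
          volume (Ico ((2 : ℝ) ^ k) (2 ^ k + x) ∩ Ioi (4 * x)) :=
        setLIntegral_const _ _
    _ ≤ ENNReal.ofReal (4 / 3 / 2 ^ k) * ENNReal.ofReal x := by
        gcongr
        calc _ ≤ volume (Ico ((2 : ℝ) ^ k) (2 ^ k + x)) := measure_mono inter_subset_left
          _ = ENNReal.ofReal x := by rw [Real.volume_Ico, add_sub_cancel_left]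
    _ = ENNReal.ofReal (4 / 3 * x / 2 ^ k) := by
        rw [← ENNReal.ofReal_mul (by positivity)]
        ring_nf

theorem setLIntegral_dyadicRightNbhd_inter_Ioi_inv_sub_le_one {x : ℝ} (hx : 0 < x) :
    ∫⁻ y in dyadicRightNbhd x ∩ Ioi (4 * x), ENNReal.ofReal (y - x)⁻¹ ≤ 1 := by
  set k₀ := Int.log 2 (3 * x) + 1
  have hk₀ : 3 * x < 2 ^ k₀ := by exact_mod_cast Int.lt_zpow_succ_log_self one_lt_two (3 * x)
  have hempty : ∀ k < k₀,
      ∫⁻ y in Ico (2 ^ k) (2 ^ k + x) ∩ Ioi (4 * x), ENNReal.ofReal (y - x)⁻¹ = 0 := by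
    intro k hk
    have hle : (2 : ℝ) ^ k ≤ 3 * x :=
      (zpow_le_zpow_right₀ one_le_two (Int.le_of_lt_add_one hk)).trans
        (by exact_mod_cast Int.zpow_log_le_self one_lt_two (by linarith : (0 : ℝ) < 3 * x))
    have : Ico ((2 : ℝ) ^ k) (2 ^ k + x) ∩ Ioi (4 * x) = ∅ :=
      eq_empty_of_forall_notMem <| by
        rintro y ⟨⟨-, hy⟩, hy' : 4 * x < y⟩
        linarith
    rw [this, Measure.restrict_empty, lintegral_zero_measure]
  calc _ ≤ ∑' k : ℤ,
        ∫⁻ y in Ico (2 ^ k) (2 ^ k + x) ∩ Ioi (4 * x), ENNReal.ofReal (y - x)⁻¹ := by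
        rw [dyadicRightNbhd, iUnion_inter]
        exact lintegral_iUnion_le _ _
    _ = ∑' m : ℕ, ∫⁻ y in Ico (2 ^ (k₀ + m)) (2 ^ (k₀ + m) + x) ∩ Ioi (4 * x),
          ENNReal.ofReal (y - x)⁻¹ := tsum_int_eq_tsum_nat_add hempty
    _ ≤ ∑' m : ℕ, ENNReal.ofReal (8 / 3 * x / 2 ^ k₀ / 2 / 2 ^ m) := by
        refine ENNReal.tsum_le_tsum fun m =>
          (setLIntegral_Ico_inter_Ioi_inv_sub_le x _).trans_eq ?_
        rw [zpow_add₀ two_ne_zero, zpow_natCast]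
        ring_nf
    _ = ENNReal.ofReal (8 / 3 * x / 2 ^ k₀) := by
        rw [← ENNReal.ofReal_tsum_of_nonneg (fun m => by positivity) (summable_geometric_two' _),
          tsum_geometric_two']
    _ ≤ 1 := ENNReal.ofReal_le_one.2 <| (div_le_one (by positivity)).2 (by linarith)

theorem ofReal_norm_lnorms_Kker_sub_le {s x y : ℝ} (hs : 1 ≤ s) (hx : 0 < x) (hxy : x < y) :
    ENNReal.ofReal ‖lnorms s (fun n => Kker n (x - y) - Kker n (-y))‖ ≤
      4 * (dyadicRightNbhd x).indicator (fun y => ENNReal.ofReal (y - x)⁻¹) y := by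
  by_cases hy : y ∈ dyadicRightNbhd x
  · have hnonneg : 0 ≤ lnorms s (fun n => Kker n (x - y) - Kker n (-y)) :=
      Real.rpow_nonneg (tsum_nonneg fun _ => by positivity) _
    rw [indicator_of_mem hy, Real.norm_of_nonneg hnonneg, ← ENNReal.ofReal_ofNat 4,
      ← ENNReal.ofReal_mul four_pos.le]
    exact ENNReal.ofReal_le_ofReal (lnorms_Kker_sub_le hs hx hxy)
  · simp [lnorms_Kker_sub_eq_zero (by positivity) hx hxy hy]

/-- The kernel `K` satisfies the Hörmander condition. -/
theorem stmt4 (s : ℝ) (hs : 2 ≤ s) :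
    ∃ C > 0, ∀ x : ℝ, 0 < x →
      (∫ y in Set.Ioi (4 * x), lnorms s (fun n => Kker n (x - y) - Kker n (-y))) ≤ C := by
  refine ⟨4, four_pos, fun x hx => ?_⟩
  set f := fun y => lnorms s (fun n => Kker n (x - y) - Kker n (-y))
  have hlint : ∫⁻ y in Ioi (4 * x), ENNReal.ofReal ‖f y‖ ≤ 4 :=
    calc _ ≤ ∫⁻ y in Ioi (4 * x),
          4 * (dyadicRightNbhd x).indicator (fun y => ENNReal.ofReal (y - x)⁻¹) y :=
          setLIntegral_mono' measurableSet_Ioi fun y (hy : 4 * x < y) =>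
            ofReal_norm_lnorms_Kker_sub_le (by linarith) hx (by linarith)
      _ = 4 * ∫⁻ y in dyadicRightNbhd x ∩ Ioi (4 * x), ENNReal.ofReal (y - x)⁻¹ := by
          rw [lintegral_const_mul' _ _ ENNReal.ofNat_ne_top,
            lintegral_indicator (measurableSet_dyadicRightNbhd x),
            Measure.restrict_restrict (measurableSet_dyadicRightNbhd x)]
      _ ≤ 4 * 1 := by grw [setLIntegral_dyadicRightNbhd_inter_Ioi_inv_sub_le_one hx]
      _ = 4 := mul_one 4
  -- `norm_integral_le_lintegral_norm` needs no integrability, so `f` is never shown measurable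
  calc ∫ y in Ioi (4 * x), f y ≤ ‖∫ y in Ioi (4 * x), f y‖ := Real.le_norm_self _
    _ ≤ (∫⁻ y in Ioi (4 * x), ENNReal.ofReal ‖f y‖).toReal :=
        norm_integral_le_lintegral_norm _
    _ ≤ 4 := ENNReal.toReal_le_of_le_ofReal four_pos.le (by simpa using hlint)
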